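/- arXiv:1402.3365 — 5 statements merged into one kernel-verified Lean document; each statement's English description precedes it below -/
import Mathlib

section
/- In the GSVD setup with G̃ = U Υ̃ Xᵀ and L̃ = V M̃ Xᵀ, for any r̃ ∈ ℝ^m and y := (Xᵀ)⁻¹ Υ̃ᵀ Uᵀ r̃, the value of the Tikhonov functional at y satisfies ‖G̃y − r̃‖₂² + ‖L̃y‖₂² = r̃ᵀ U (I_m − Υ̃Υ̃ᵀ) Uᵀ r̃ = Σ_{i=q+1}^{p} μ_i² s_i² = ‖Q Uᵀ r̃‖₂², where s_i := (Uᵀ r̃)_{i−q}. -/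
open Matrix

lemma gsvd_orth_dot {k : ℕ} (U : Matrix (Fin k) (Fin k) ℝ) (hU : Uᵀ * U = 1)
    (a b : Fin k → ℝ) : (U *ᵥ a) ⬝ᵥ (U *ᵥ b) = a ⬝ᵥ b := by
  rw [Matrix.dotProduct_mulVec]
  have h1 : U *ᵥ a = a ᵥ* Uᵀ := by
    rw [← Matrix.transpose_transpose U, Matrix.mulVec_transpose, Matrix.transpose_transpose]
  rw [h1, Matrix.vecMul_vecMul, hU, Matrix.vecMul_one]

lemma gsvd_sum_sq_dot {k : ℕ} (v : Fin k → ℝ) : ∑ i, (v i) ^ 2 = v ⬝ᵥ v := by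
  simp [dotProduct, sq]

lemma gsvd_orth_sum_sq {k : ℕ} (U : Matrix (Fin k) (Fin k) ℝ) (hU : Uᵀ * U = 1)
    (v : Fin k → ℝ) : ∑ i, ((U *ᵥ v) i) ^ 2 = ∑ i, (v i) ^ 2 := by
  rw [gsvd_sum_sq_dot, gsvd_sum_sq_dot, gsvd_orth_dot U hU]

/-- In the GSVD setup with G̃ = U Υ̃ Xᵀ, L̃ = V M̃ Xᵀ and y := (Xᵀ)⁻¹ Υ̃ᵀ Uᵀ r̃, the value of the
Tikhonov functional at y satisfies
‖G̃y − r̃‖₂² + ‖L̃y‖₂² = r̃ᵀ U (I_m − Υ̃Υ̃ᵀ) Uᵀ r̃ = Σ_{i=q+1}^{p} μ_i² s_i² = ‖Q Uᵀ r̃‖₂²,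
where s_i := (Uᵀ r̃)_{i−q}. -/
theorem gsvd_tikhonov_value_identities
    (m n p : ℕ) (hm : 0 < m) (hmn : m < n) (hpn : p ≤ n) (hnmp : n ≤ m + p)
    (ν μ : ℕ → ℝ)
    (hν0 : ∀ i, n - m ≤ i → i < p → 0 < ν i)
    (hν1 : ∀ i, n - m ≤ i → i < p → ν i < 1)
    (hνmono : ∀ i j, n - m ≤ i → i ≤ j → j < p → ν i ≤ ν j)
    (hμdef : ∀ i, n - m ≤ i → i < p → μ i = Real.sqrt (1 - ν i ^ 2))
    (hνtop : ∀ i, p ≤ i → i < n → ν i = 1)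
    (hμlow : ∀ i, i < n - m → μ i = 1)
    (U : Matrix (Fin m) (Fin m) ℝ) (hU : Uᵀ * U = 1)
    (V : Matrix (Fin p) (Fin p) ℝ) (hV : Vᵀ * V = 1)
    (X : Matrix (Fin n) (Fin n) ℝ) (hX : IsUnit X.det)
    (Υt : Matrix (Fin m) (Fin n) ℝ)
    (hΥt : ∀ (i : Fin m) (j : Fin n), Υt i j = if (j : ℕ) = (n - m) + (i : ℕ) then ν j else 0)
    (Mt : Matrix (Fin p) (Fin n) ℝ)
    (hMt : ∀ (i : Fin p) (j : Fin n), Mt i j = if (j : ℕ) = (i : ℕ) then μ j else 0)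
    (Q : Matrix (Fin m) (Fin m) ℝ)
    (hQ : ∀ (i j : Fin m),
      Q i j = if i = j ∧ (n - m) + (i : ℕ) < p then μ ((n - m) + (i : ℕ)) else 0)
    (Gt : Matrix (Fin m) (Fin n) ℝ) (hGt : Gt = U * Υt * Xᵀ)
    (Lt : Matrix (Fin p) (Fin n) ℝ) (hLt : Lt = V * Mt * Xᵀ)
    (rt : Fin m → ℝ) (y : Fin n → ℝ)
    (hy : y = (Xᵀ)⁻¹ *ᵥ (Υtᵀ *ᵥ (Uᵀ *ᵥ rt))) :
    ((∑ i, ((Gt *ᵥ y - rt) i) ^ 2) + ∑ i, ((Lt *ᵥ y) i) ^ 2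
        = rt ⬝ᵥ ((U * (1 - Υt * Υtᵀ) * Uᵀ) *ᵥ rt)) ∧
    (rt ⬝ᵥ ((U * (1 - Υt * Υtᵀ) * Uᵀ) *ᵥ rt)
        = ∑ i : Fin m, (if (n - m) + (i : ℕ) < p
            then μ ((n - m) + (i : ℕ)) ^ 2 * ((Uᵀ *ᵥ rt) i) ^ 2 else 0)) ∧
    ((∑ i : Fin m, (if (n - m) + (i : ℕ) < p
            then μ ((n - m) + (i : ℕ)) ^ 2 * ((Uᵀ *ᵥ rt) i) ^ 2 else 0))
        = ∑ i, ((Q *ᵥ (Uᵀ *ᵥ rt)) i) ^ 2) := by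
  set q : ℕ := n - m with hqdef
  have hqm : q + m = n := by omega
  set s : Fin m → ℝ := Uᵀ *ᵥ rt with hsdef
  set w : Fin n → ℝ := Υtᵀ *ᵥ s with hwdef
  set S : ℕ → ℝ := fun k => if h : k < m then s ⟨k, h⟩ else 0 with hSdef
  have hSval : ∀ i : Fin m, S (i : ℕ) = s i := by
    intro i
    simp only [hSdef, dif_pos i.isLt]
  -- basic matrix facts
  have hXT : Xᵀ * (Xᵀ)⁻¹ = 1 :=
    Matrix.mul_nonsing_inv _ (by simpa [Matrix.det_transpose] using hX)
  have hUU : U * Uᵀ = 1 := mul_eq_one_comm.mp hU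
  have hrt : rt = U *ᵥ s := by
    rw [hsdef, Matrix.mulVec_mulVec, hUU, Matrix.one_mulVec]
  -- Gt *ᵥ y and Lt *ᵥ y
  have hGy : Gt *ᵥ y = U *ᵥ (Υt *ᵥ w) := by
    rw [hGt, hy, Matrix.mulVec_mulVec, Matrix.mul_assoc (U * Υt) _ _, hXT, Matrix.mul_one,
      ← Matrix.mulVec_mulVec]
  have hLy : Lt *ᵥ y = V *ᵥ (Mt *ᵥ w) := by
    rw [hLt, hy, Matrix.mulVec_mulVec, Matrix.mul_assoc (V * Mt) _ _, hXT, Matrix.mul_one,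
      ← Matrix.mulVec_mulVec]
  -- entrywise computation of w
  have hw : ∀ j : Fin n, w j = if q ≤ (j : ℕ) then ν j * S ((j : ℕ) - q) else 0 := by
    intro j
    rw [hwdef]
    simp only [Matrix.mulVec, dotProduct, Matrix.transpose_apply, hΥt]
    by_cases hj : q ≤ (j : ℕ)
    · have hjm : (j : ℕ) - q < m := by omega
      rw [if_pos hj]
      rw [Finset.sum_eq_single (⟨(j : ℕ) - q, hjm⟩ : Fin m)]
      · rw [if_pos (by simp; omega)]
        rw [hSdef]
        simp only [dif_pos hjm]
      · intro b _ hb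
        rw [if_neg, zero_mul]
        intro hc
        apply hb
        apply Fin.ext
        simp only []
        omega
      · intro hmem; exact absurd (Finset.mem_univ _) hmem
    · rw [if_neg hj]
      apply Finset.sum_eq_zero
      intro i _
      rw [if_neg (by omega), zero_mul]
  -- entrywise computation of Υt *ᵥ w
  have hΥw : ∀ i : Fin m, (Υt *ᵥ w) i = ν (q + (i : ℕ)) ^ 2 * s i := by
    intro i
    have hqi : q + (i : ℕ) < n := by have := i.isLt; omega
    simp only [Matrix.mulVec, dotProduct, hΥt]
    rw [Finset.sum_eq_single (⟨q + (i : ℕ), hqi⟩ : Fin n)]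
    · rw [if_pos (by simp), hw]
      simp only []
      rw [if_pos (by omega)]
      have : q + (i : ℕ) - q = (i : ℕ) := by omega
      rw [this, hSval]
      ring
    · intro b _ hb
      rw [if_neg, zero_mul]
      intro hc
      apply hb
      apply Fin.ext
      simpa using hc
    · intro hmem; exact absurd (Finset.mem_univ _) hmem
  -- entrywise computation of Mt *ᵥ w
  have hMw : ∀ i : Fin p, (Mt *ᵥ w) i
      = if q ≤ (i : ℕ) then μ i * (ν i * S ((i : ℕ) - q)) else 0 := by
    intro i
    have hip : (i : ℕ) < n := lt_of_lt_of_le i.isLt hpn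
    simp only [Matrix.mulVec, dotProduct, hMt]
    rw [Finset.sum_eq_single (⟨(i : ℕ), hip⟩ : Fin n)]
    · rw [if_pos (by simp), hw]
      simp only []
      by_cases hqi : q ≤ (i : ℕ)
      · rw [if_pos hqi, if_pos hqi]
      · rw [if_neg hqi, if_neg hqi, mul_zero]
    · intro b _ hb
      rw [if_neg, zero_mul]
      intro hc
      apply hb
      apply Fin.ext
      simpa using hc
    · intro hmem; exact absurd (Finset.mem_univ _) hmem
  -- Q *ᵥ s entrywise
  have hQs : ∀ i : Fin m, (Q *ᵥ s) i
      = if q + (i : ℕ) < p then μ (q + (i : ℕ)) * s i else 0 := by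
    intro i
    simp only [Matrix.mulVec, dotProduct, hQ]
    rw [Finset.sum_eq_single i]
    · by_cases hip : q + (i : ℕ) < p
      · rw [if_pos ⟨rfl, hip⟩, if_pos hip]
      · rw [if_neg (by tauto), if_neg hip, zero_mul]
    · intro b _ hb
      have : ¬ (i = b ∧ q + (i : ℕ) < p) := fun hc => hb (hc.1.symm)
      rw [if_neg this, zero_mul]
    · intro hmem; exact absurd (Finset.mem_univ _) hmem
  -- the quadratic form equals a diagonal sum
  have hquad : rt ⬝ᵥ ((U * (1 - Υt * Υtᵀ) * Uᵀ) *ᵥ rt)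
      = ∑ i : Fin m, (1 - ν (q + (i : ℕ)) ^ 2) * (s i) ^ 2 := by
    have h1 : (U * (1 - Υt * Υtᵀ) * Uᵀ) *ᵥ rt = U *ᵥ ((1 - Υt * Υtᵀ) *ᵥ s) := by
      rw [hsdef, Matrix.mulVec_mulVec, Matrix.mulVec_mulVec, mul_assoc]
    rw [h1, hrt, gsvd_orth_dot U hU]
    rw [Matrix.sub_mulVec, Matrix.one_mulVec, ← Matrix.mulVec_mulVec, ← hwdef]
    simp only [dotProduct, Pi.sub_apply]
    apply Finset.sum_congr rfl
    intro i _
    rw [hΥw i]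
    ring
  -- key per-index fact: μ² = 1 - ν² in range
  have hμsq : ∀ k, q ≤ k → k < p → μ k ^ 2 = 1 - ν k ^ 2 := by
    intro k h1 h2
    rw [hμdef k h1 h2, Real.sq_sqrt]
    nlinarith [hν0 k h1 h2, hν1 k h1 h2]
  -- the L̃ sum, reindexed over Fin m
  have hLsum : ∑ i : Fin p, ((Mt *ᵥ w) i) ^ 2
      = ∑ i : Fin m, (if q + (i : ℕ) < p
          then (μ (q + (i : ℕ)) * (ν (q + (i : ℕ)) * S (i : ℕ))) ^ 2 else 0) := by
    set F : ℕ → ℝ := fun k => if q ≤ k then (μ k * (ν k * S (k - q))) ^ 2 else 0 with hF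
    set G : ℕ → ℝ := fun k => if q + k < p then (μ (q + k) * (ν (q + k) * S k)) ^ 2 else 0
      with hG
    have h1 : ∀ i : Fin p, ((Mt *ᵥ w) i) ^ 2 = F (i : ℕ) := by
      intro i
      rw [hMw i, hF]
      by_cases hqi : q ≤ (i : ℕ)
      · simp only [if_pos hqi]
      · simp only [if_neg hqi]; ring
    calc ∑ i : Fin p, ((Mt *ᵥ w) i) ^ 2 = ∑ i : Fin p, F (i : ℕ) :=
            Finset.sum_congr rfl (fun i _ => h1 i)
      _ = ∑ k ∈ Finset.range p, F k := Fin.sum_univ_eq_sum_range F p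
      _ = ∑ k ∈ Finset.Ico q p, F k := by
            rw [Finset.range_eq_Ico]
            apply (Finset.sum_subset (Finset.Ico_subset_Ico (Nat.zero_le q) le_rfl) _).symm
            intro x hx hx'
            simp only [Finset.mem_Ico] at hx hx'
            rw [hF]
            simp only []
            rw [if_neg (by omega)]
      _ = ∑ k ∈ Finset.range (p - q), F (q + k) := by
            rw [Finset.sum_Ico_eq_sum_range]
      _ = ∑ k ∈ Finset.range (p - q), G k := by
            apply Finset.sum_congr rfl
            intro k hk
            simp only [Finset.mem_range] at hk
            rw [hF, hG]
            simp only []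
            have hk2 : q + k - q = k := by omega
            rw [if_pos (by omega : q ≤ q + k), hk2, if_pos (by omega : q + k < p)]
      _ = ∑ k ∈ Finset.range m, G k := by
            apply Finset.sum_subset
            · apply Finset.range_subset_range.mpr; omega
            · intro x hx hx'
              simp only [Finset.mem_range] at hx hx'
              rw [hG]
              simp only []
              rw [if_neg (by omega)]
      _ = ∑ i : Fin m, G (i : ℕ) := (Fin.sum_univ_eq_sum_range G m).symm
      _ = _ := by
            apply Finset.sum_congr rfl
            intro i _
            rw [hG]
  -- now the three conjuncts
  refine ⟨?_, ?_, ?_⟩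
  · -- conjunct 1
    have hA : ∑ i, ((Gt *ᵥ y - rt) i) ^ 2 = ∑ i : Fin m, ((Υt *ᵥ w) i - s i) ^ 2 := by
      have : Gt *ᵥ y - rt = U *ᵥ (Υt *ᵥ w - s) := by
        rw [hGy, hrt, Matrix.mulVec_sub]
      rw [this, gsvd_orth_sum_sq U hU]
      simp [Pi.sub_apply]
    have hB : ∑ i, ((Lt *ᵥ y) i) ^ 2 = ∑ i : Fin p, ((Mt *ᵥ w) i) ^ 2 := by
      rw [hLy, gsvd_orth_sum_sq V hV]
    rw [hA, hB, hLsum, hquad, ← Finset.sum_add_distrib]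
    apply Finset.sum_congr rfl
    intro i _
    rw [hΥw i, hSval i]
    by_cases hip : q + (i : ℕ) < p
    · rw [if_pos hip]
      have hμ := hμsq (q + (i : ℕ)) (by omega) hip
      nlinarith [hμ]
    · rw [if_neg hip]
      have hν := hνtop (q + (i : ℕ)) (by omega) (by have := i.isLt; omega)
      rw [hν]
      ring
  · -- conjunct 2
    rw [hquad]
    apply Finset.sum_congr rfl
    intro i _
    by_cases hip : q + (i : ℕ) < p
    · rw [if_pos hip, hμsq (q + (i : ℕ)) (by omega) hip]
    · rw [if_neg hip]
      rw [hνtop (q + (i : ℕ)) (by omega) (by have := i.isLt; omega)]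
      ring
  · -- conjunct 3
    apply Finset.sum_congr rfl
    intro i _
    rw [hQs i]
    by_cases hip : q + (i : ℕ) < p
    · rw [if_pos hip, if_pos hip]; ring
    · rw [if_neg hip, if_neg hip]; ring
end

section
/- In the GSVD setup with G̃ = U Υ̃ Xᵀ and L̃ = V M̃ Xᵀ, for any r̃ ∈ ℝ^m the vector y := (Xᵀ)⁻¹ Υ̃ᵀ Uᵀ r̃ is the unique minimizer over w ∈ ℝ^n of the Tikhonov functional w ↦ ‖G̃w − r̃‖₂² + ‖L̃w‖₂². -/
/-!
Because `ν_i² + μ_i² = 1` for every `i`, the stacked matrix `[Υ̃; M̃]` has orthonormal columns: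
`Υ̃ᵀΥ̃ + M̃ᵀM̃ = I`. Orthogonality of `U` and `V` turns the functional, in the variable
`x = Xᵀw`, into `‖Υ̃x − s‖² + ‖M̃x‖²` with `s = Uᵀr̃`, and completing the square gives
`‖x − Υ̃ᵀs‖² + ‖s‖² − ‖Υ̃ᵀs‖²`. Since `Xᵀ` is invertible, the minimum is attained exactly at
`Xᵀw = Υ̃ᵀs`, i.e. at `w = y`.
-/

open Matrix

section Tikhonov

variable {R : Type*} [CommRing R] {k m n p : Type*} [Fintype k] [Fintype m] [Fintype n] [Fintype p]

def tikhonovObjective (G : Matrix m n R) (L : Matrix p n R) (r : m → R) (w : n → R) : R :=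
  (G *ᵥ w - r) ⬝ᵥ (G *ᵥ w - r) + (L *ᵥ w) ⬝ᵥ (L *ᵥ w)

theorem mulVec_dotProduct_mulVec_self (C : Matrix k m R) (v : m → R) :
    (C *ᵥ v) ⬝ᵥ (C *ᵥ v) = ((Cᵀ * C) *ᵥ v) ⬝ᵥ v := by
  rw [dotProduct_mulVec, ← mulVec_transpose, mulVec_mulVec, dotProduct_comm]

theorem mulVec_dotProduct_mulVec_self_of_transpose_mul_self_eq_one [DecidableEq m]
    {U : Matrix k m R} (hU : Uᵀ * U = 1) (v : m → R) : (U *ᵥ v) ⬝ᵥ (U *ᵥ v) = v ⬝ᵥ v := by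
  rw [mulVec_dotProduct_mulVec_self, hU, one_mulVec]

theorem tikhonovObjective_orthogonal_mul [DecidableEq m] [DecidableEq p] {U : Matrix m m R}
    {V : Matrix p p R} (hU : Uᵀ * U = 1) (hV : Vᵀ * V = 1) (A : Matrix m n R) (B : Matrix p n R)
    (Y : Matrix n n R) (r : m → R) (w : n → R) :
    tikhonovObjective (U * A * Y) (V * B * Y) r w = tikhonovObjective A B (Uᵀ *ᵥ r) (Y *ᵥ w) := by
  have hr : r = U *ᵥ (Uᵀ *ᵥ r) := by rw [mulVec_mulVec, mul_eq_one_comm.mp hU, one_mulVec]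
  conv_lhs => rw [hr]
  simp only [tikhonovObjective, ← mulVec_mulVec, ← mulVec_sub,
    mulVec_dotProduct_mulVec_self_of_transpose_mul_self_eq_one hU,
    mulVec_dotProduct_mulVec_self_of_transpose_mul_self_eq_one hV]

theorem tikhonovObjective_eq_of_gram_eq_one [DecidableEq n] {A : Matrix m n R} {B : Matrix p n R}
    (hAB : Aᵀ * A + Bᵀ * B = 1) (s : m → R) (x : n → R) :
    tikhonovObjective A B s x
      = (x - Aᵀ *ᵥ s) ⬝ᵥ (x - Aᵀ *ᵥ s) + (s ⬝ᵥ s - (Aᵀ *ᵥ s) ⬝ᵥ (Aᵀ *ᵥ s)) := by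
  have hgram : (A *ᵥ x) ⬝ᵥ (A *ᵥ x) + (B *ᵥ x) ⬝ᵥ (B *ᵥ x) = x ⬝ᵥ x := by
    rw [mulVec_dotProduct_mulVec_self, mulVec_dotProduct_mulVec_self, ← add_dotProduct,
      ← add_mulVec, hAB, one_mulVec]
  have hcross : (A *ᵥ x) ⬝ᵥ s = x ⬝ᵥ (Aᵀ *ᵥ s) := by
    rw [dotProduct_comm, dotProduct_mulVec, mulVec_transpose, dotProduct_comm]
  simp only [tikhonovObjective, dotProduct_sub, sub_dotProduct, dotProduct_comm s (A *ᵥ x),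
    dotProduct_comm (Aᵀ *ᵥ s) x] at *
  linear_combination hgram - 2 * hcross

theorem tikhonovObjective_lt_of_ne {K : Type*} [Field K] [LinearOrder K] [IsStrictOrderedRing K]
    [DecidableEq m] [DecidableEq n] [DecidableEq p] {U : Matrix m m K} {V : Matrix p p K}
    (hU : Uᵀ * U = 1) (hV : Vᵀ * V = 1) {A : Matrix m n K} {B : Matrix p n K}
    (hAB : Aᵀ * A + Bᵀ * B = 1) {Y : Matrix n n K} (hY : IsUnit Y.det) (r : m → K) {w : n → K}
    (hw : w ≠ Y⁻¹ *ᵥ (Aᵀ *ᵥ (Uᵀ *ᵥ r))) :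
    tikhonovObjective (U * A * Y) (V * B * Y) r (Y⁻¹ *ᵥ (Aᵀ *ᵥ (Uᵀ *ᵥ r)))
      < tikhonovObjective (U * A * Y) (V * B * Y) r w := by
  set b := Aᵀ *ᵥ (Uᵀ *ᵥ r)
  have hYy : Y *ᵥ (Y⁻¹ *ᵥ b) = b := by rw [mulVec_mulVec, mul_nonsing_inv _ hY, one_mulVec]
  have hwb : Y *ᵥ w - b ≠ 0 := by
    rw [← hYy, ← mulVec_sub]
    have hYinj := mulVec_injective_of_isUnit ((isUnit_iff_isUnit_det Y).mpr hY)
    exact fun h => hw (sub_eq_zero.mp (hYinj (h.trans (mulVec_zero Y).symm)))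
  rw [tikhonovObjective_orthogonal_mul hU hV, tikhonovObjective_orthogonal_mul hU hV,
    tikhonovObjective_eq_of_gram_eq_one hAB, tikhonovObjective_eq_of_gram_eq_one hAB, hYy,
    sub_self, zero_dotProduct, zero_add]
  exact lt_add_of_pos_left _ <| lt_of_le_of_ne (Finset.sum_nonneg fun i _ => mul_self_nonneg _)
    (Ne.symm (dotProduct_self_eq_zero.not.mpr hwb))

end Tikhonov

theorem transpose_mul_self_eq_diagonal_of_shift {R : Type*} [CommRing R] {a b : ℕ} (c : ℕ)
    (d : ℕ → R) {A : Matrix (Fin a) (Fin b) R}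
    (hA : ∀ i j, A i j = if (j : ℕ) = c + i then d j else 0) :
    Aᵀ * A = diagonal fun j : Fin b => if c ≤ (j : ℕ) ∧ (j : ℕ) < c + a then d j ^ 2 else 0 := by
  ext j k
  simp only [mul_apply, transpose_apply, hA, diagonal_apply, ite_zero_mul_ite_zero]
  by_cases hjk : j = k
  · subst hjk
    simp only [if_true, and_self, ← sq]
    by_cases hj : c ≤ (j : ℕ) ∧ (j : ℕ) < c + a
    · rw [if_pos hj, Fintype.sum_eq_single ⟨j - c, by omega⟩ fun i hi => if_neg ?_,
        if_pos (by simp; omega)]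
      exact fun h => hi (Fin.ext (by simp; omega))
    · exact (Finset.sum_eq_zero fun i _ => if_neg (by omega)).trans (if_neg hj).symm
  · exact (Finset.sum_eq_zero fun i _ => if_neg fun h => hjk (Fin.ext (by omega))).trans
      (if_neg hjk).symm

theorem gsvd_gram_eq_one {m n p : ℕ} (hmn : m ≤ n) (hnmp : n ≤ m + p) {ν μ : ℕ → ℝ}
    (hν : ∀ i, n - m ≤ i → i < p → ν i ^ 2 ≤ 1)
    (hμdef : ∀ i, n - m ≤ i → i < p → μ i = Real.sqrt (1 - ν i ^ 2))
    (hνtop : ∀ i, p ≤ i → i < n → ν i = 1)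
    (hμlow : ∀ i, i < n - m → μ i = 1)
    {Υt : Matrix (Fin m) (Fin n) ℝ}
    (hΥt : ∀ (i : Fin m) (j : Fin n), Υt i j = if (j : ℕ) = (n - m) + (i : ℕ) then ν j else 0)
    {Mt : Matrix (Fin p) (Fin n) ℝ}
    (hMt : ∀ (i : Fin p) (j : Fin n), Mt i j = if (j : ℕ) = (i : ℕ) then μ j else 0) :
    Υtᵀ * Υt + Mtᵀ * Mt = 1 := by
  rw [transpose_mul_self_eq_diagonal_of_shift (n - m) ν hΥt,
    transpose_mul_self_eq_diagonal_of_shift 0 μ fun i j => by rw [hMt, zero_add],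
    diagonal_add, ← diagonal_one]
  congr 1
  funext j
  rcases lt_or_ge (j : ℕ) (n - m) with hjq | hjq
  · rw [if_neg (by omega), if_pos (by omega), hμlow _ hjq]
    ring
  rcases lt_or_ge (j : ℕ) p with hjp | hjp
  · rw [if_pos (by omega), if_pos (by omega), hμdef _ hjq hjp,
      Real.sq_sqrt (sub_nonneg.mpr (hν _ hjq hjp))]
    ring
  · rw [if_pos (by omega), if_neg (by omega), hνtop _ hjp j.isLt]
    ring

theorem sum_sq_eq_dotProduct_self {R : Type*} [CommSemiring R] {ι : Type*} [Fintype ι]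
    (v : ι → R) : ∑ i, v i ^ 2 = v ⬝ᵥ v := by
  simp only [dotProduct, sq]

theorem gsvd_unique_minimizer_general
    (m n p : ℕ) (hmn : m < n) (hnmp : n ≤ m + p)
    (ν μ : ℕ → ℝ)
    (hν0 : ∀ i, n - m ≤ i → i < p → 0 < ν i)
    (hν1 : ∀ i, n - m ≤ i → i < p → ν i < 1)
    (hμdef : ∀ i, n - m ≤ i → i < p → μ i = Real.sqrt (1 - ν i ^ 2))
    (hνtop : ∀ i, p ≤ i → i < n → ν i = 1)
    (hμlow : ∀ i, i < n - m → μ i = 1)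
    (U : Matrix (Fin m) (Fin m) ℝ) (hU : Uᵀ * U = 1)
    (V : Matrix (Fin p) (Fin p) ℝ) (hV : Vᵀ * V = 1)
    (X : Matrix (Fin n) (Fin n) ℝ) (hX : IsUnit X.det)
    (Υt : Matrix (Fin m) (Fin n) ℝ)
    (hΥt : ∀ (i : Fin m) (j : Fin n), Υt i j = if (j : ℕ) = (n - m) + (i : ℕ) then ν j else 0)
    (Mt : Matrix (Fin p) (Fin n) ℝ)
    (hMt : ∀ (i : Fin p) (j : Fin n), Mt i j = if (j : ℕ) = (i : ℕ) then μ j else 0)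
    (Gt : Matrix (Fin m) (Fin n) ℝ) (hGt : Gt = U * Υt * Xᵀ)
    (Lt : Matrix (Fin p) (Fin n) ℝ) (hLt : Lt = V * Mt * Xᵀ)
    (rt : Fin m → ℝ) (y : Fin n → ℝ)
    (hy : y = (Xᵀ)⁻¹ *ᵥ (Υtᵀ *ᵥ (Uᵀ *ᵥ rt))) :
    ∀ w : Fin n → ℝ, w ≠ y →
      (∑ i, ((Gt *ᵥ y - rt) i) ^ 2) + (∑ i, ((Lt *ᵥ y) i) ^ 2)
        < (∑ i, ((Gt *ᵥ w - rt) i) ^ 2) + (∑ i, ((Lt *ᵥ w) i) ^ 2) := by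
  intro w hw
  have hgram : Υtᵀ * Υt + Mtᵀ * Mt = 1 :=
    gsvd_gram_eq_one hmn.le hnmp (fun i hi hip => pow_le_one₀ (hν0 i hi hip).le (hν1 i hi hip).le)
      hμdef hνtop hμlow hΥt hMt
  simp only [sum_sq_eq_dotProduct_self]
  subst hGt hLt hy
  exact tikhonovObjective_lt_of_ne hU hV hgram (by rwa [det_transpose]) rt hw

/-- In the GSVD setup with G̃ = U Υ̃ Xᵀ and L̃ = V M̃ Xᵀ, for any r̃ ∈ ℝ^m the vector
y := (Xᵀ)⁻¹ Υ̃ᵀ Uᵀ r̃ is the unique minimizer over w ∈ ℝ^n of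
w ↦ ‖G̃w − r̃‖₂² + ‖L̃w‖₂². -/
theorem gsvd_unique_minimizer
    (m n p : ℕ) (hm : 0 < m) (hmn : m < n) (hpn : p ≤ n) (hnmp : n ≤ m + p)
    (ν μ : ℕ → ℝ)
    (hν0 : ∀ i, n - m ≤ i → i < p → 0 < ν i)
    (hν1 : ∀ i, n - m ≤ i → i < p → ν i < 1)
    (hνmono : ∀ i j, n - m ≤ i → i ≤ j → j < p → ν i ≤ ν j)
    (hμdef : ∀ i, n - m ≤ i → i < p → μ i = Real.sqrt (1 - ν i ^ 2))
    (hνtop : ∀ i, p ≤ i → i < n → ν i = 1)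
    (hμlow : ∀ i, i < n - m → μ i = 1)
    (U : Matrix (Fin m) (Fin m) ℝ) (hU : Uᵀ * U = 1)
    (V : Matrix (Fin p) (Fin p) ℝ) (hV : Vᵀ * V = 1)
    (X : Matrix (Fin n) (Fin n) ℝ) (hX : IsUnit X.det)
    (Υt : Matrix (Fin m) (Fin n) ℝ)
    (hΥt : ∀ (i : Fin m) (j : Fin n), Υt i j = if (j : ℕ) = (n - m) + (i : ℕ) then ν j else 0)
    (Mt : Matrix (Fin p) (Fin n) ℝ)
    (hMt : ∀ (i : Fin p) (j : Fin n), Mt i j = if (j : ℕ) = (i : ℕ) then μ j else 0)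
    (Gt : Matrix (Fin m) (Fin n) ℝ) (hGt : Gt = U * Υt * Xᵀ)
    (Lt : Matrix (Fin p) (Fin n) ℝ) (hLt : Lt = V * Mt * Xᵀ)
    (rt : Fin m → ℝ) (y : Fin n → ℝ)
    (hy : y = (Xᵀ)⁻¹ *ᵥ (Υtᵀ *ᵥ (Uᵀ *ᵥ rt))) :
    ∀ w : Fin n → ℝ, w ≠ y →
      (∑ i, ((Gt *ᵥ y - rt) i) ^ 2) + (∑ i, ((Lt *ᵥ y) i) ^ 2)
        < (∑ i, ((Gt *ᵥ w - rt) i) ^ 2) + (∑ i, ((Lt *ᵥ w) i) ^ 2) :=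
  gsvd_unique_minimizer_general m n p hmn hnmp ν μ hν0 hν1 hμdef hνtop hμlow U hU V hV X hX Υt hΥt
    Mt hMt Gt hGt Lt hLt rt y hy
end

section
/- In the GSVD setup, let S ∈ ℝ^{n×n} be symmetric with M̃ S M̃ᵀ = I_p. Then Q Qᵀ + Q Υ̃ S Υ̃ᵀ Qᵀ is the m×m diagonal matrix diag(I_{m+p−n}, 0_{n−p}), i.e. it has its first m+p−n diagonal entries equal to 1 and all other entries equal to 0. -/
open Matrix

/-- In the GSVD setup, if S ∈ ℝ^{n×n} is symmetric with M̃ S M̃ᵀ = I_p, then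
Q Qᵀ + Q Υ̃ S Υ̃ᵀ Qᵀ = diag(I_{m+p−n}, 0_{n−p}). -/
theorem gsvd_covariance_identity
    (m n p : ℕ) (hm : 0 < m) (hmn : m < n) (hpn : p ≤ n) (hnmp : n ≤ m + p)
    (ν μ : ℕ → ℝ)
    (hν0 : ∀ i, n - m ≤ i → i < p → 0 < ν i)
    (hν1 : ∀ i, n - m ≤ i → i < p → ν i < 1)
    (hνmono : ∀ i j, n - m ≤ i → i ≤ j → j < p → ν i ≤ ν j)
    (hμdef : ∀ i, n - m ≤ i → i < p → μ i = Real.sqrt (1 - ν i ^ 2))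
    (hνtop : ∀ i, p ≤ i → i < n → ν i = 1)
    (hμlow : ∀ i, i < n - m → μ i = 1)
    (U : Matrix (Fin m) (Fin m) ℝ) (hU : Uᵀ * U = 1)
    (V : Matrix (Fin p) (Fin p) ℝ) (hV : Vᵀ * V = 1)
    (X : Matrix (Fin n) (Fin n) ℝ) (hX : IsUnit X.det)
    (Υt : Matrix (Fin m) (Fin n) ℝ)
    (hΥt : ∀ (i : Fin m) (j : Fin n), Υt i j = if (j : ℕ) = (n - m) + (i : ℕ) then ν j else 0)
    (Mt : Matrix (Fin p) (Fin n) ℝ)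
    (hMt : ∀ (i : Fin p) (j : Fin n), Mt i j = if (j : ℕ) = (i : ℕ) then μ j else 0)
    (Q : Matrix (Fin m) (Fin m) ℝ)
    (hQ : ∀ (i j : Fin m),
      Q i j = if i = j ∧ (n - m) + (i : ℕ) < p then μ ((n - m) + (i : ℕ)) else 0)
    (S : Matrix (Fin n) (Fin n) ℝ) (hS : S.IsSymm)
    (hSM : Mt * S * Mtᵀ = 1) :
    Q * Qᵀ + Q * Υt * S * Υtᵀ * Qᵀ
      = Matrix.of (fun i j : Fin m => if i = j ∧ (i : ℕ) < m + p - n then (1 : ℝ) else 0) := by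
  -- key consequence of hSM
  have key : ∀ a b : Fin n, (a : ℕ) < p → (b : ℕ) < p →
      μ a * S a b * μ b = if a = b then 1 else 0 := by
    intro a b ha hb
    have h := congrFun (congrFun hSM ⟨(a : ℕ), ha⟩) ⟨(b : ℕ), hb⟩
    rw [Matrix.mul_apply] at h
    have hMS : ∀ (c : Fin p) (l : Fin n), (Mt * S) c l = μ (c : ℕ) * S ⟨(c : ℕ), lt_of_lt_of_le c.isLt hpn⟩ l := by
      intro c l
      rw [Matrix.mul_apply]
      rw [Finset.sum_eq_single (⟨(c : ℕ), lt_of_lt_of_le c.isLt hpn⟩ : Fin n)]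
      · rw [hMt]; simp
      · intro k _ hk
        rw [hMt, if_neg, zero_mul]
        intro hh; exact hk (Fin.ext hh)
      · simp
    simp only [hMS] at h
    have hone : (1 : Matrix (Fin p) (Fin p) ℝ) ⟨(a:ℕ), ha⟩ ⟨(b:ℕ), hb⟩
        = if a = b then (1:ℝ) else 0 := by
      rw [Matrix.one_apply]
      by_cases hab : a = b
      · simp [hab]
      · rw [if_neg, if_neg hab]
        intro hh
        exact hab (Fin.ext (by simpa using congrArg (Fin.val) hh))
    rw [Finset.sum_eq_single b] at h
    · rw [Matrix.transpose_apply, hMt, hone] at h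
      simpa using h
    · intro l _ hl
      rw [Matrix.transpose_apply, hMt, if_neg, mul_zero]
      intro hh; exact hl (Fin.ext hh)
    · simp
  ext i j
  by_cases hi : n - m + (i : ℕ) < p
  · by_cases hj : n - m + (j : ℕ) < p
    · -- main case
      have him : (i : ℕ) < m := i.isLt
      have hjm : (j : ℕ) < m := j.isLt
      set fi : Fin n := ⟨n - m + (i : ℕ), by omega⟩ with hfi
      set fj : Fin n := ⟨n - m + (j : ℕ), by omega⟩ with hfj
      have hA : ∀ (k : Fin m), n - m + (k : ℕ) < p → ∀ a : Fin n,
          (Q * Υt) k a = if (a : ℕ) = n - m + (k : ℕ)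
            then μ (n - m + (k : ℕ)) * ν (n - m + (k : ℕ)) else 0 := by
        intro k hk a
        rw [Matrix.mul_apply]
        rw [Finset.sum_eq_single k]
        · rw [hQ, hΥt]
          rw [if_pos ⟨rfl, hk⟩]
          split
          · next h => rw [h]
          · rw [mul_zero]
        · intro l _ hl
          rw [hQ, if_neg (fun hh => hl hh.1.symm), zero_mul]
        · simp
      have hrw : Q * Υt * S * Υtᵀ * Qᵀ = (Q * Υt) * S * (Q * Υt)ᵀ := by
        rw [Matrix.transpose_mul, ← Matrix.mul_assoc]
      have hPS : ∀ b : Fin n, ((Q * Υt) * S) i b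
          = μ (n - m + (i:ℕ)) * ν (n - m + (i:ℕ)) * S fi b := by
        intro b
        rw [Matrix.mul_apply]
        rw [Finset.sum_eq_single fi]
        · rw [hA i hi, if_pos rfl]
        · intro a _ ha
          rw [hA i hi, if_neg, zero_mul]
          intro hh; exact ha (Fin.ext hh)
        · simp
      have hB : (Q * Υt * S * Υtᵀ * Qᵀ) i j
          = (μ (n - m + (i:ℕ)) * ν (n - m + (i:ℕ))) * S fi fj
            * (μ (n - m + (j:ℕ)) * ν (n - m + (j:ℕ))) := by
        rw [hrw, Matrix.mul_apply]
        rw [Finset.sum_eq_single fj]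
        · rw [hPS, Matrix.transpose_apply, hA j hj, if_pos rfl]
        · intro b _ hb
          rw [Matrix.transpose_apply, hA j hj, if_neg, mul_zero]
          intro hh; exact hb (Fin.ext hh)
        · simp
      have h1 : (Q * Qᵀ) i j = if i = j then μ (n - m + (i:ℕ)) * μ (n - m + (i:ℕ)) else 0 := by
        rw [Matrix.mul_apply]
        rw [Finset.sum_eq_single i]
        · rw [Matrix.transpose_apply, hQ, hQ, if_pos ⟨rfl, hi⟩]
          by_cases hij : i = j
          · subst hij; rw [if_pos ⟨rfl, hi⟩, if_pos rfl]
          · rw [if_neg (fun hh => hij hh.1.symm), mul_zero, if_neg hij]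
        · intro k _ hk
          rw [hQ, if_neg (fun hh => hk hh.1.symm), zero_mul]
        · simp
      have hkeyij := key fi fj hi hj
      have hμsq : μ (n - m + (i:ℕ)) * μ (n - m + (i:ℕ)) = 1 - ν (n - m + (i:ℕ)) ^ 2 := by
        have h0 := hν0 _ (Nat.le_add_right _ _) hi
        have h1' := hν1 _ (Nat.le_add_right _ _) hi
        rw [hμdef _ (Nat.le_add_right _ _) hi]
        exact Real.mul_self_sqrt (by nlinarith)
      rw [Matrix.add_apply, h1, hB]
      have hsplit : (μ (n - m + (i:ℕ)) * ν (n - m + (i:ℕ))) * S fi fj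
            * (μ (n - m + (j:ℕ)) * ν (n - m + (j:ℕ)))
          = ν (n - m + (i:ℕ)) * ν (n - m + (j:ℕ))
            * (μ (↑fi : ℕ) * S fi fj * μ (↑fj : ℕ)) := by
        simp only [hfi, hfj]; ring
      rw [hsplit, hkeyij]
      have hfifj : (fi = fj) ↔ (i = j) := by
        constructor
        · intro h
          have := congrArg Fin.val h
          simp only [hfi, hfj] at this
          exact Fin.ext (by omega)
        · intro h; subst h; rfl
      simp only [Matrix.of_apply]
      by_cases hij : i = j
      · subst hij
        rw [if_pos rfl, if_pos (hfifj.mpr rfl), if_pos ⟨rfl, by omega⟩]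
        rw [hμsq]; ring
      · rw [if_neg hij, if_neg (fun h => hij (hfifj.mp h)),
          if_neg (fun h => hij h.1)]
        ring
    · -- column j of Qᵀ is zero
      have hcol : ∀ k : Fin m, Q j k = 0 := by
        intro k; rw [hQ, if_neg (fun hh => hj hh.2)]
      rw [Matrix.add_apply, Matrix.mul_apply, Matrix.mul_apply]
      simp only [Matrix.transpose_apply, hcol, mul_zero, Finset.sum_const_zero,
        add_zero, Matrix.of_apply]
      rw [if_neg]
      rintro ⟨h, _⟩
      subst h
      exact hj hi
  · -- row i of Q is zero
    have hrow : ∀ k : Fin m, Q i k = 0 := by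
      intro k; rw [hQ, if_neg (fun hh => hi hh.2)]
    have hass : Q * Υt * S * Υtᵀ * Qᵀ = Q * (Υt * S * Υtᵀ * Qᵀ) := by
      simp only [Matrix.mul_assoc]
    rw [hass, Matrix.add_apply, Matrix.mul_apply, Matrix.mul_apply]
    simp only [hrow, zero_mul, Finset.sum_const_zero, add_zero, Matrix.of_apply]
    rw [if_neg]
    rintro ⟨_, h⟩
    exact hi (by omega)
end

section
/- Assume the GSVD setup with G̃ = U Υ̃ Xᵀ and L̃ = V M̃ Xᵀ, let r̃ ∈ ℝ^m, s_i := (Uᵀ r̃)_{i−q}, and γ_i := ν_i/μ_i for q+1 ≤ i ≤ p. Then for every σ > 0, the minimum over w ∈ ℝ^n of the functional ‖G̃w − r̃‖₂² + σ⁻² ‖L̃w‖₂² equals Σ_{i=q+1}^{p} s_i² / (γ_i² σ² + 1). -/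
/-!
Substituting `y = Xᵀ w` (a bijection, `X` being invertible) and using that `U` and `V` are
orthogonal, the functional becomes `∑ⱼ ((aⱼ yⱼ - sⱼ)² + σ⁻² (bⱼ yⱼ)²)` with `aⱼ = νⱼ` for `j ≥ q`
and `bⱼ = μⱼ` for `j < p` (both `0` otherwise): independent scalar problems, one per coordinate.
Completing the square, the `j`-th one has minimum `σ⁻² bⱼ² sⱼ² / (aⱼ² + σ⁻² bⱼ²)`, which is
`sⱼ² / (γⱼ² σ² + 1)` for `q ≤ j < p` and `0` otherwise, since `sⱼ = 0` for `j < q` and `bⱼ = 0`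
for `j ≥ p`.
-/

open Matrix Set

theorem sum_sq_mulVec_of_transpose_mul_self_eq_one {ι κ : Type*} [Fintype ι] [Fintype κ]
    [DecidableEq ι] {W : Matrix κ ι ℝ} (hW : Wᵀ * W = 1) (x : ι → ℝ) :
    ∑ i, (W *ᵥ x) i ^ 2 = ∑ i, x i ^ 2 := by
  have hdot : (W *ᵥ x) ⬝ᵥ (W *ᵥ x) = x ⬝ᵥ x := by
    rw [dotProduct_mulVec, ← mulVec_transpose, mulVec_mulVec, hW, one_mulVec]
  simpa [dotProduct, sq] using hdot

theorem sum_sq_mul_mulVec_sub_of_transpose_mul_self_eq_one {ι κ : Type*} [Fintype ι] [Fintype κ]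
    [DecidableEq ι] {U : Matrix ι ι ℝ} (hU : Uᵀ * U = 1) (A : Matrix ι κ ℝ) (y : κ → ℝ)
    (r : ι → ℝ) :
    ∑ i, ((U * A) *ᵥ y - r) i ^ 2 = ∑ i, (A *ᵥ y - Uᵀ *ᵥ r) i ^ 2 := by
  have hr : U *ᵥ (Uᵀ *ᵥ r) = r := by
    rw [mulVec_mulVec, mul_eq_one_comm.mp hU, one_mulVec]
  conv_rhs => rw [← sum_sq_mulVec_of_transpose_mul_self_eq_one hU, mulVec_sub, hr, mulVec_mulVec]

theorem mulVec_apply_of_forall_ne_eq_zero {ι κ : Type*} [Fintype κ] {A : Matrix ι κ ℝ} {i : ι}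
    {k : κ} (hA : ∀ j, j ≠ k → A i j = 0) (y : κ → ℝ) : (A *ᵥ y) i = A i k * y k :=
  Finset.sum_eq_single k (fun j _ hj => by simp [hA j hj]) (by simp)

theorem sum_ite_le_eq_sum_natAdd {M : Type*} [AddCommMonoid M] {q m n : ℕ} (h : q + m = n)
    (g : Fin n → M) :
    ∑ j : Fin n, (if q ≤ (j : ℕ) then g j else 0) = ∑ i : Fin m, g ⟨q + i, by omega⟩ := by
  subst h
  rw [Fin.sum_univ_add, Finset.sum_eq_zero fun j _ => if_neg (not_le.mpr j.isLt), zero_add]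
  simp [Fin.natAdd]

theorem sum_ite_lt_eq_sum_castLE {M : Type*} [AddCommMonoid M] {p n : ℕ} (h : p ≤ n)
    (g : Fin n → M) :
    ∑ j : Fin n, (if (j : ℕ) < p then g j else 0) = ∑ i : Fin p, g (Fin.castLE h i) := by
  obtain ⟨k, rfl⟩ := Nat.exists_eq_add_of_le h
  simp [Fin.sum_univ_add, Fin.castAdd]

/-- For `s = Uᵀ r̃` this is the paper's `s_j = (Uᵀ r̃)_{j-q}`, extended by `0` to all of `Fin n`. -/
def padShift {α : Type*} [Zero α] (q : ℕ) {m n : ℕ} (s : Fin m → α) (j : Fin n) : α :=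
  if h : q ≤ (j : ℕ) ∧ (j : ℕ) - q < m then s ⟨j - q, h.2⟩ else 0

theorem padShift_mk_add {α : Type*} [Zero α] {q m n : ℕ} (s : Fin m → α) (i : Fin m)
    (h : q + i < n) : padShift q s (⟨q + i, h⟩ : Fin n) = s i := by
  simp [padShift]

theorem padShift_of_lt {α : Type*} [Zero α] {q m n : ℕ} (s : Fin m → α) {j : Fin n}
    (h : (j : ℕ) < q) : padShift q s j = 0 :=
  dif_neg fun h' => absurd h'.1 (not_le.mpr h)

theorem sum_sq_shiftDiag_mulVec_sub {q m n : ℕ} (h : q + m = n) {d : Fin n → ℝ}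
    {A : Matrix (Fin m) (Fin n) ℝ} (hA : ∀ i j, A i j = if (j : ℕ) = q + i then d j else 0)
    (y : Fin n → ℝ) (s : Fin m → ℝ) :
    ∑ i, (A *ᵥ y - s) i ^ 2
      = ∑ j : Fin n, ((if q ≤ (j : ℕ) then d j else 0) * y j - padShift q s j) ^ 2 := by
  have hAy : ∀ i, (A *ᵥ y) i = d ⟨q + i, by omega⟩ * y ⟨q + i, by omega⟩ := fun i => by
    rw [mulVec_apply_of_forall_ne_eq_zero (k := ⟨q + i, by omega⟩) fun j hj => ?_, hA,
      if_pos rfl]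
    rw [hA, if_neg fun h => hj (Fin.ext h)]
  calc ∑ i, (A *ᵥ y - s) i ^ 2
      = ∑ i : Fin m, (d ⟨q + i, by omega⟩ * y ⟨q + i, by omega⟩
          - padShift q s (⟨q + i, by omega⟩ : Fin n)) ^ 2 := by
        simp only [Pi.sub_apply, hAy, padShift_mk_add]
    _ = ∑ j : Fin n, if q ≤ (j : ℕ) then (d j * y j - padShift q s j) ^ 2 else 0 := by
        rw [sum_ite_le_eq_sum_natAdd h]
    _ = _ := Finset.sum_congr rfl fun j _ => by
        by_cases hj : q ≤ (j : ℕ)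
        · simp [hj]
        · simp [hj, padShift_of_lt s (not_le.mp hj)]

theorem sum_sq_diag_mulVec {p n : ℕ} (h : p ≤ n) {d : Fin n → ℝ} {B : Matrix (Fin p) (Fin n) ℝ}
    (hB : ∀ i j, B i j = if (j : ℕ) = i then d j else 0) (y : Fin n → ℝ) :
    ∑ i, (B *ᵥ y) i ^ 2 = ∑ j : Fin n, ((if (j : ℕ) < p then d j else 0) * y j) ^ 2 := by
  have hBy : ∀ i, (B *ᵥ y) i = d (Fin.castLE h i) * y (Fin.castLE h i) := fun i => by
    rw [mulVec_apply_of_forall_ne_eq_zero (k := Fin.castLE h i) fun j hj => ?_, hB,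
      if_pos (Fin.val_castLE h i)]
    rw [hB, if_neg (by simpa [Fin.ext_iff] using hj)]
  calc ∑ i, (B *ᵥ y) i ^ 2
      = ∑ j : Fin n, if (j : ℕ) < p then (d j * y j) ^ 2 else 0 := by
        simp only [hBy, sum_ite_lt_eq_sum_castLE h]
    _ = _ := Finset.sum_congr rfl fun j _ => by by_cases hj : (j : ℕ) < p <;> simp [hj]

theorem isLeast_range_sum_apply {ι α β : Type*} [Fintype ι] [AddCommMonoid β] [PartialOrder β]
    [IsOrderedAddMonoid β] {f : ι → α → β} {c : ι → β} (h : ∀ i, IsLeast (range (f i)) (c i)) :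
    IsLeast (range fun x : ι → α => ∑ i, f i (x i)) (∑ i, c i) := by
  choose x hx using fun i => (h i).1
  refine ⟨⟨x, Finset.sum_congr rfl fun i _ => hx i⟩, ?_⟩
  rintro _ ⟨y, rfl⟩
  exact Finset.sum_le_sum fun i _ => (h i).2 ⟨y i, rfl⟩

theorem isLeast_range_sq_sub_add_mul_sq {a b s κ : ℝ} (hD : 0 < a ^ 2 + κ * b ^ 2) :
    IsLeast (range fun t => (a * t - s) ^ 2 + κ * (b * t) ^ 2)
      (κ * b ^ 2 * s ^ 2 / (a ^ 2 + κ * b ^ 2)) := by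
  set D := a ^ 2 + κ * b ^ 2
  have hsq : ∀ t, (a * t - s) ^ 2 + κ * (b * t) ^ 2
      = κ * b ^ 2 * s ^ 2 / D + (D * t - a * s) ^ 2 / D := fun t => by
    field_simp; ring
  refine ⟨⟨a * s / D, ?_⟩, ?_⟩
  · simp only [hsq]; field_simp; ring
  · rintro _ ⟨t, rfl⟩
    simp only [hsq t]
    exact le_add_of_nonneg_right (by positivity)

theorem gsvd_weights_pos {q p n : ℕ} {ν μ : ℕ → ℝ} {κ : ℝ} (hqp : q ≤ p)
    (hν0 : ∀ i, q ≤ i → i < p → 0 < ν i) (hνtop : ∀ i, p ≤ i → i < n → ν i = 1)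
    (hμlow : ∀ i, i < q → μ i = 1) (hκ : 0 < κ) (j : Fin n) :
    0 < (if q ≤ (j : ℕ) then ν j else 0) ^ 2 + κ * (if (j : ℕ) < p then μ j else 0) ^ 2 := by
  by_cases hqj : q ≤ (j : ℕ)
  · by_cases hjp : (j : ℕ) < p
    · have := hν0 j hqj hjp
      rw [if_pos hqj]; positivity
    · simp [hqj, hjp, hνtop j (not_lt.mp hjp) j.isLt]
  · rw [if_neg hqj, if_pos (show (j : ℕ) < p by omega), hμlow j (not_le.mp hqj)]
    positivity

theorem sum_tikhonov_filter_eq {q m n p : ℕ} (h : q + m = n) {ν μ : ℕ → ℝ}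
    (hμ : ∀ i, q ≤ i → i < p → 0 < μ i) {σ : ℝ} (hσ : σ ≠ 0) (s : Fin m → ℝ) :
    (∑ i : Fin m, if q + (i : ℕ) < p
        then s i ^ 2 / ((ν (q + (i : ℕ)) / μ (q + (i : ℕ))) ^ 2 * σ ^ 2 + 1) else 0)
      = ∑ j : Fin n, (σ ^ 2)⁻¹ * (if (j : ℕ) < p then μ j else 0) ^ 2 * padShift q s j ^ 2
          / ((if q ≤ (j : ℕ) then ν j else 0) ^ 2
            + (σ ^ 2)⁻¹ * (if (j : ℕ) < p then μ j else 0) ^ 2) := by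
  calc _ = ∑ i : Fin m, if q + (i : ℕ) < p then padShift q s (⟨q + i, by omega⟩ : Fin n) ^ 2
          / ((ν (q + (i : ℕ)) / μ (q + (i : ℕ))) ^ 2 * σ ^ 2 + 1) else 0 := by
        simp only [padShift_mk_add]
    _ = ∑ j : Fin n, if q ≤ (j : ℕ) then (if (j : ℕ) < p then padShift q s j ^ 2
          / ((ν j / μ j) ^ 2 * σ ^ 2 + 1) else 0) else 0 := by
        rw [sum_ite_le_eq_sum_natAdd h]
    _ = _ := Finset.sum_congr rfl fun j _ => by
        by_cases hqj : q ≤ (j : ℕ)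
        · by_cases hjp : (j : ℕ) < p
          · have := hμ j hqj hjp
            simp only [if_pos hqj, if_pos hjp]
            field_simp
          · simp [hqj, hjp]
        · simp [hqj, padShift_of_lt s (not_le.mp hqj)]

theorem gsvd_tikhonov_min_value_general
    (m n p : ℕ) (hmn : m < n) (hpn : p ≤ n) (hnmp : n ≤ m + p)
    (ν μ : ℕ → ℝ)
    (hν0 : ∀ i, n - m ≤ i → i < p → 0 < ν i)
    (hν1 : ∀ i, n - m ≤ i → i < p → ν i < 1)
    (hμdef : ∀ i, n - m ≤ i → i < p → μ i = Real.sqrt (1 - ν i ^ 2))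
    (hνtop : ∀ i, p ≤ i → i < n → ν i = 1)
    (hμlow : ∀ i, i < n - m → μ i = 1)
    (U : Matrix (Fin m) (Fin m) ℝ) (hU : Uᵀ * U = 1)
    (V : Matrix (Fin p) (Fin p) ℝ) (hV : Vᵀ * V = 1)
    (X : Matrix (Fin n) (Fin n) ℝ) (hX : IsUnit X.det)
    (Υt : Matrix (Fin m) (Fin n) ℝ)
    (hΥt : ∀ (i : Fin m) (j : Fin n), Υt i j = if (j : ℕ) = (n - m) + (i : ℕ) then ν j else 0)
    (Mt : Matrix (Fin p) (Fin n) ℝ)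
    (hMt : ∀ (i : Fin p) (j : Fin n), Mt i j = if (j : ℕ) = (i : ℕ) then μ j else 0)
    (Gt : Matrix (Fin m) (Fin n) ℝ) (hGt : Gt = U * Υt * Xᵀ)
    (Lt : Matrix (Fin p) (Fin n) ℝ) (hLt : Lt = V * Mt * Xᵀ)
    (rt : Fin m → ℝ) :
    ∀ σ : ℝ, 0 < σ →
      IsLeast
        (Set.range fun w : Fin n → ℝ =>
          (∑ i, ((Gt *ᵥ w - rt) i) ^ 2) + (σ ^ 2)⁻¹ * ∑ i, ((Lt *ᵥ w) i) ^ 2)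
        (∑ i : Fin m, if (n - m) + (i : ℕ) < p
          then ((Uᵀ *ᵥ rt) i) ^ 2
            / ((ν ((n - m) + (i : ℕ)) / μ ((n - m) + (i : ℕ))) ^ 2 * σ ^ 2 + 1)
          else 0) := by
  intro σ hσ
  have hqmn : n - m + m = n := by omega
  have hμpos : ∀ i, n - m ≤ i → i < p → 0 < μ i := fun i hqi hip => by
    rw [hμdef i hqi hip, Real.sqrt_pos]
    nlinarith [hν0 i hqi hip, hν1 i hqi hip]
  have hXt : Function.Surjective (Xᵀ *ᵥ · : (Fin n → ℝ) → Fin n → ℝ) :=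
    mulVec_surjective_iff_isUnit.mpr (by rwa [isUnit_iff_isUnit_det, det_transpose])
  have hobj : (fun w : Fin n → ℝ =>
      (∑ i, ((Gt *ᵥ w - rt) i) ^ 2) + (σ ^ 2)⁻¹ * ∑ i, ((Lt *ᵥ w) i) ^ 2)
      = (fun y : Fin n → ℝ => ∑ j : Fin n, (((if n - m ≤ (j : ℕ) then ν j else 0) * y j
            - padShift (n - m) (Uᵀ *ᵥ rt) j) ^ 2
          + (σ ^ 2)⁻¹ * ((if (j : ℕ) < p then μ j else 0) * y j) ^ 2)) ∘ (Xᵀ *ᵥ ·) := by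
    funext w
    rw [hGt, hLt, ← mulVec_mulVec, sum_sq_mul_mulVec_sub_of_transpose_mul_self_eq_one hU,
      ← mulVec_mulVec, ← mulVec_mulVec, sum_sq_mulVec_of_transpose_mul_self_eq_one hV,
      sum_sq_shiftDiag_mulVec_sub hqmn hΥt, sum_sq_diag_mulVec hpn hMt, Finset.mul_sum,
      ← Finset.sum_add_distrib]
    rfl
  rw [hobj, hXt.range_comp, sum_tikhonov_filter_eq hqmn hμpos hσ.ne']
  exact isLeast_range_sum_apply fun j => isLeast_range_sq_sub_add_mul_sq
    (gsvd_weights_pos (by omega) hν0 hνtop hμlow (by positivity) j)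

/-- In the GSVD setup with G̃ = U Υ̃ Xᵀ and L̃ = V M̃ Xᵀ, s_i := (Uᵀ r̃)_{i−q} and
γ_i := ν_i/μ_i, for every σ > 0 the minimum over w of
‖G̃w − r̃‖₂² + σ⁻² ‖L̃w‖₂² equals Σ_{i=q+1}^{p} s_i² / (γ_i² σ² + 1). -/
theorem gsvd_tikhonov_min_value
    (m n p : ℕ) (hm : 0 < m) (hmn : m < n) (hpn : p ≤ n) (hnmp : n ≤ m + p)
    (ν μ : ℕ → ℝ)
    (hν0 : ∀ i, n - m ≤ i → i < p → 0 < ν i)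
    (hν1 : ∀ i, n - m ≤ i → i < p → ν i < 1)
    (hνmono : ∀ i j, n - m ≤ i → i ≤ j → j < p → ν i ≤ ν j)
    (hμdef : ∀ i, n - m ≤ i → i < p → μ i = Real.sqrt (1 - ν i ^ 2))
    (hνtop : ∀ i, p ≤ i → i < n → ν i = 1)
    (hμlow : ∀ i, i < n - m → μ i = 1)
    (U : Matrix (Fin m) (Fin m) ℝ) (hU : Uᵀ * U = 1)
    (V : Matrix (Fin p) (Fin p) ℝ) (hV : Vᵀ * V = 1)
    (X : Matrix (Fin n) (Fin n) ℝ) (hX : IsUnit X.det)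
    (Υt : Matrix (Fin m) (Fin n) ℝ)
    (hΥt : ∀ (i : Fin m) (j : Fin n), Υt i j = if (j : ℕ) = (n - m) + (i : ℕ) then ν j else 0)
    (Mt : Matrix (Fin p) (Fin n) ℝ)
    (hMt : ∀ (i : Fin p) (j : Fin n), Mt i j = if (j : ℕ) = (i : ℕ) then μ j else 0)
    (Gt : Matrix (Fin m) (Fin n) ℝ) (hGt : Gt = U * Υt * Xᵀ)
    (Lt : Matrix (Fin p) (Fin n) ℝ) (hLt : Lt = V * Mt * Xᵀ)
    (rt : Fin m → ℝ) :
    ∀ σ : ℝ, 0 < σ →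
      IsLeast
        (Set.range fun w : Fin n → ℝ =>
          (∑ i, ((Gt *ᵥ w - rt) i) ^ 2) + (σ ^ 2)⁻¹ * ∑ i, ((Lt *ᵥ w) i) ^ 2)
        (∑ i : Fin m, if (n - m) + (i : ℕ) < p
          then ((Uᵀ *ᵥ rt) i) ^ 2
            / ((ν ((n - m) + (i : ℕ)) / μ ((n - m) + (i : ℕ))) ^ 2 * σ ^ 2 + 1)
          else 0) :=
  gsvd_tikhonov_min_value_general m n p hmn hpn hnmp ν μ hν0 hν1 hμdef hνtop hμlow U hU V hV X hX Υt
    hΥt Mt hMt Gt hGt Lt hLt rt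
end

section
/- Assume the GSVD setup with G̃ = U Υ̃ Xᵀ and L̃ = V M̃ Xᵀ, let r̃ ∈ ℝ^m, s_i := (Uᵀ r̃)_{i−q}, γ_i := ν_i/μ_i, and for σ > 0 let A(σ) := G̃ (G̃ᵀG̃ + σ⁻² L̃ᵀL̃)⁻¹ G̃ᵀ. Then ‖(I_m − A(σ)) r̃‖₂² = Σ_{i=q+1}^{p} s_i² / (γ_i² σ² + 1)². -/
open Matrix

/-- In the GSVD setup with G̃ = U Υ̃ Xᵀ, L̃ = V M̃ Xᵀ, s_i := (Uᵀ r̃)_{i−q}, γ_i := ν_i/μ_i and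
A(σ) := G̃ (G̃ᵀG̃ + σ⁻² L̃ᵀL̃)⁻¹ G̃ᵀ, one has
‖(I_m − A(σ)) r̃‖₂² = Σ_{i=q+1}^{p} s_i² / (γ_i² σ² + 1)². -/
theorem gsvd_weighted_residual_norm
    (m n p : ℕ) (hm : 0 < m) (hmn : m < n) (hpn : p ≤ n) (hnmp : n ≤ m + p)
    (ν μ : ℕ → ℝ)
    (hν0 : ∀ i, n - m ≤ i → i < p → 0 < ν i)
    (hν1 : ∀ i, n - m ≤ i → i < p → ν i < 1)
    (hνmono : ∀ i j, n - m ≤ i → i ≤ j → j < p → ν i ≤ ν j)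
    (hμdef : ∀ i, n - m ≤ i → i < p → μ i = Real.sqrt (1 - ν i ^ 2))
    (hνtop : ∀ i, p ≤ i → i < n → ν i = 1)
    (hμlow : ∀ i, i < n - m → μ i = 1)
    (U : Matrix (Fin m) (Fin m) ℝ) (hU : Uᵀ * U = 1)
    (V : Matrix (Fin p) (Fin p) ℝ) (hV : Vᵀ * V = 1)
    (X : Matrix (Fin n) (Fin n) ℝ) (hX : IsUnit X.det)
    (Υt : Matrix (Fin m) (Fin n) ℝ)
    (hΥt : ∀ (i : Fin m) (j : Fin n), Υt i j = if (j : ℕ) = (n - m) + (i : ℕ) then ν j else 0)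
    (Mt : Matrix (Fin p) (Fin n) ℝ)
    (hMt : ∀ (i : Fin p) (j : Fin n), Mt i j = if (j : ℕ) = (i : ℕ) then μ j else 0)
    (Gt : Matrix (Fin m) (Fin n) ℝ) (hGt : Gt = U * Υt * Xᵀ)
    (Lt : Matrix (Fin p) (Fin n) ℝ) (hLt : Lt = V * Mt * Xᵀ)
    (rt : Fin m → ℝ) :
    ∀ σ : ℝ, 0 < σ →
      ∀ A : Matrix (Fin m) (Fin m) ℝ,
        A = Gt * (Gtᵀ * Gt + (σ ^ 2)⁻¹ • (Ltᵀ * Lt))⁻¹ * Gtᵀ →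
        (∑ i, (((1 - A) *ᵥ rt) i) ^ 2)
          = ∑ i : Fin m, (if (n - m) + (i : ℕ) < p
              then ((Uᵀ *ᵥ rt) i) ^ 2
                / ((ν ((n - m) + (i : ℕ)) / μ ((n - m) + (i : ℕ))) ^ 2 * σ ^ 2 + 1) ^ 2
              else 0) := by
  intro σ hσ A hA
  set q := n - m with hq
  have hqm : q + m = n := by omega
  have hqp : q ≤ p := by omega
  have hσ2 : (σ : ℝ) ^ 2 ≠ 0 := pow_ne_zero _ (ne_of_gt hσ)
  have hσ2pos : (0:ℝ) < σ ^ 2 := by positivity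
  -- the diagonal entries
  set d : Fin n → ℝ := fun j =>
    (if q ≤ (j : ℕ) then ν (j : ℕ) ^ 2 else 0)
      + (σ ^ 2)⁻¹ * (if (j : ℕ) < p then μ (j : ℕ) ^ 2 else 0) with hd
  -- positivity facts
  have hμ2 : ∀ j : ℕ, q ≤ j → j < p → μ j ^ 2 = 1 - ν j ^ 2 := by
    intro j h1 h2
    rw [hμdef j h1 h2, Real.sq_sqrt]
    have h0 := hν0 j h1 h2
    have h3 := hν1 j h1 h2
    nlinarith
  have hμpos : ∀ j : ℕ, q ≤ j → j < p → 0 < μ j := by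
    intro j h1 h2
    rw [hμdef j h1 h2]
    apply Real.sqrt_pos.mpr
    have h0 := hν0 j h1 h2
    have h3 := hν1 j h1 h2
    nlinarith
  have hdpos : ∀ j : Fin n, 0 < d j := by
    intro j
    simp only [hd]
    by_cases h1 : q ≤ (j : ℕ)
    · by_cases h2 : (j : ℕ) < p
      · have := hν0 (j : ℕ) h1 h2
        have := hμpos (j : ℕ) h1 h2
        rw [if_pos h1, if_pos h2]
        positivity
      · have hν := hνtop (j : ℕ) (by omega) j.isLt
        rw [if_pos h1, if_neg h2, hν]
        norm_num
    · have h2 : (j : ℕ) < p := by omega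
      have hμ := hμlow (j : ℕ) (by omega)
      rw [if_neg h1, if_pos h2, hμ]
      simp only [one_pow, zero_add]
      positivity
  have hdne : ∀ j : Fin n, d j ≠ 0 := fun j => ne_of_gt (hdpos j)
  -- Υtᵀ * Υt is diagonal
  have hΥΥ : Υtᵀ * Υt
      = Matrix.diagonal (fun j : Fin n => if q ≤ (j : ℕ) then ν (j : ℕ) ^ 2 else 0) := by
    ext j k
    rw [Matrix.mul_apply, Matrix.diagonal_apply]
    by_cases hjk : j = k
    · subst hjk
      rw [if_pos rfl]
      simp only [Matrix.transpose_apply, hΥt]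
      by_cases hj : q ≤ (j : ℕ)
      · rw [if_pos hj]
        have hi : (j : ℕ) - q < m := by omega
        rw [Finset.sum_eq_single (⟨(j : ℕ) - q, hi⟩ : Fin m)]
        · rw [if_pos (by simp; omega)]; ring
        · intro b _ hb
          rw [if_neg, zero_mul]
          intro h
          exact hb (Fin.ext (by simp; omega))
        · intro h; exact absurd (Finset.mem_univ _) h
      · rw [if_neg hj]
        apply Finset.sum_eq_zero
        intro i _
        rw [if_neg (by omega), zero_mul]
    · rw [if_neg hjk]
      apply Finset.sum_eq_zero
      intro i _
      rw [Matrix.transpose_apply, hΥt, hΥt]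
      have hne : (j : ℕ) ≠ (k : ℕ) := fun h => hjk (Fin.ext h)
      by_cases h1 : (j : ℕ) = q + (i : ℕ)
      · rw [if_neg (show ¬((k : ℕ) = q + (i : ℕ)) by omega), mul_zero]
      · rw [if_neg h1, zero_mul]
  -- Mtᵀ * Mt is diagonal
  have hMM : Mtᵀ * Mt
      = Matrix.diagonal (fun j : Fin n => if (j : ℕ) < p then μ (j : ℕ) ^ 2 else 0) := by
    ext j k
    rw [Matrix.mul_apply, Matrix.diagonal_apply]
    by_cases hjk : j = k
    · subst hjk
      rw [if_pos rfl]
      simp only [Matrix.transpose_apply, hMt]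
      by_cases hj : (j : ℕ) < p
      · rw [if_pos hj]
        rw [Finset.sum_eq_single (⟨(j : ℕ), hj⟩ : Fin p)]
        · rw [if_pos (by simp)]; ring
        · intro b _ hb
          rw [if_neg, zero_mul]
          intro h
          exact hb (Fin.ext (by simp; omega))
        · intro h; exact absurd (Finset.mem_univ _) h
      · rw [if_neg hj]
        apply Finset.sum_eq_zero
        intro i _
        rw [if_neg (by omega), zero_mul]
    · rw [if_neg hjk]
      apply Finset.sum_eq_zero
      intro i _
      rw [Matrix.transpose_apply, hMt, hMt]
      have hne : (j : ℕ) ≠ (k : ℕ) := fun h => hjk (Fin.ext h)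
      by_cases h1 : (j : ℕ) = (i : ℕ)
      · rw [if_neg (show ¬((k : ℕ) = (i : ℕ)) by omega), mul_zero]
      · rw [if_neg h1, zero_mul]
  -- the middle matrix
  have hB : Gtᵀ * Gt + (σ ^ 2)⁻¹ • (Ltᵀ * Lt) = X * Matrix.diagonal d * Xᵀ := by
    have h1 : Gtᵀ * Gt = X * (Υtᵀ * Υt) * Xᵀ := by
      subst hGt
      rw [Matrix.transpose_mul, Matrix.transpose_mul, Matrix.transpose_transpose]
      calc X * (Υtᵀ * Uᵀ) * (U * Υt * Xᵀ)
          = X * (Υtᵀ * ((Uᵀ * U) * (Υt * Xᵀ))) := by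
            simp only [Matrix.mul_assoc]
        _ = X * (Υtᵀ * Υt) * Xᵀ := by
            rw [hU, Matrix.one_mul]
            simp only [Matrix.mul_assoc]
    have h2 : Ltᵀ * Lt = X * (Mtᵀ * Mt) * Xᵀ := by
      subst hLt
      rw [Matrix.transpose_mul, Matrix.transpose_mul, Matrix.transpose_transpose]
      calc X * (Mtᵀ * Vᵀ) * (V * Mt * Xᵀ)
          = X * (Mtᵀ * ((Vᵀ * V) * (Mt * Xᵀ))) := by
            simp only [Matrix.mul_assoc]
        _ = X * (Mtᵀ * Mt) * Xᵀ := by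
            rw [hV, Matrix.one_mul]
            simp only [Matrix.mul_assoc]
    rw [h1, h2, hΥΥ, hMM]
    have h3 : X * ((σ ^ 2)⁻¹ • Matrix.diagonal (fun j : Fin n => if (j : ℕ) < p then μ (j : ℕ) ^ 2 else 0)) * Xᵀ
        = (σ ^ 2)⁻¹ • (X * Matrix.diagonal (fun j : Fin n => if (j : ℕ) < p then μ (j : ℕ) ^ 2 else 0) * Xᵀ) := by
      rw [mul_smul_comm, smul_mul_assoc]
    rw [← h3, ← Matrix.add_mul, ← Matrix.mul_add]
    congr 2
    ext j k
    by_cases hjk : j = k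
    · subst hjk
      simp only [Matrix.add_apply, Matrix.smul_apply, Matrix.diagonal_apply_eq, hd,
        smul_eq_mul]
    · simp [Matrix.diagonal_apply_ne _ hjk]
  -- inverse facts
  have hXT : IsUnit Xᵀ.det := by rwa [Matrix.det_transpose]
  have hDinv : (Matrix.diagonal d)⁻¹ = Matrix.diagonal (fun j => (d j)⁻¹) :=
    Matrix.inv_eq_right_inv (by
      rw [Matrix.diagonal_mul_diagonal]
      have h0 : (fun i => d i * (d i)⁻¹) = fun _ : Fin n => (1:ℝ) := by
        funext j; exact mul_inv_cancel₀ (hdne j)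
      rw [h0, Matrix.diagonal_one])
  -- A as a sandwich
  have hAeq : A = U * Matrix.diagonal
      (fun i : Fin m => ν (q + (i : ℕ)) ^ 2 * (d ⟨q + (i : ℕ), by omega⟩)⁻¹) * Uᵀ := by
    have hsand : ∀ e : Fin n → ℝ, Υt * (Matrix.diagonal e * Υtᵀ)
        = Matrix.diagonal (fun i : Fin m => ν (q + (i : ℕ)) ^ 2 * e ⟨q + (i : ℕ), by omega⟩) := by
      intro e
      rw [← Matrix.mul_assoc]
      ext i k
      rw [Matrix.mul_apply, Matrix.diagonal_apply]
      by_cases hik : i = k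
      · subst hik
        rw [if_pos rfl]
        have hjn : q + (i : ℕ) < n := by omega
        rw [Finset.sum_eq_single (⟨q + (i : ℕ), hjn⟩ : Fin n)]
        · rw [Matrix.mul_diagonal, Matrix.transpose_apply, hΥt]
          rw [if_pos (by simp)]
          ring
        · intro b _ hb
          rw [Matrix.mul_diagonal, Matrix.transpose_apply, hΥt]
          by_cases h1 : (b : ℕ) = q + (i : ℕ)
          · exact absurd (Fin.ext (by simp [h1])) hb
          · rw [if_neg h1, zero_mul, zero_mul]
        · intro h; exact absurd (Finset.mem_univ _) h
      · rw [if_neg hik]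
        apply Finset.sum_eq_zero
        intro j _
        rw [Matrix.mul_diagonal, Matrix.transpose_apply, hΥt, hΥt]
        have hne : (i : ℕ) ≠ (k : ℕ) := fun h => hik (Fin.ext h)
        by_cases h1 : (j : ℕ) = q + (i : ℕ)
        · rw [if_neg (show ¬((j : ℕ) = q + (k : ℕ)) by omega), mul_zero]
        · rw [if_neg h1, zero_mul, zero_mul]
    rw [hA, hB, hGt]
    rw [Matrix.mul_inv_rev, Matrix.mul_inv_rev, hDinv]
    rw [Matrix.transpose_mul, Matrix.transpose_mul, Matrix.transpose_transpose]
    calc U * Υt * Xᵀ * (Xᵀ⁻¹ * (Matrix.diagonal (fun j => (d j)⁻¹) * X⁻¹)) * (X * (Υtᵀ * Uᵀ))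
        = U * (Υt * ((Xᵀ * Xᵀ⁻¹) * (Matrix.diagonal (fun j => (d j)⁻¹) * ((X⁻¹ * X) * Υtᵀ)))) * Uᵀ := by
          simp only [Matrix.mul_assoc]
      _ = U * (Υt * (Matrix.diagonal (fun j => (d j)⁻¹) * Υtᵀ)) * Uᵀ := by
          rw [Matrix.mul_nonsing_inv _ hXT, Matrix.nonsing_inv_mul _ hX,
            Matrix.one_mul, Matrix.one_mul]
      _ = _ := by rw [hsand]
  -- 1 - A is a sandwich
  have hUUT : U * Uᵀ = 1 := mul_eq_one_comm.mp hU
  set c : Fin m → ℝ :=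
    fun i => 1 - ν (q + (i : ℕ)) ^ 2 * (d ⟨q + (i : ℕ), by omega⟩)⁻¹ with hc
  have h1A : (1 : Matrix (Fin m) (Fin m) ℝ) - A = U * Matrix.diagonal c * Uᵀ := by
    have hdg : Matrix.diagonal c
        = 1 - Matrix.diagonal (fun i : Fin m =>
            ν (q + (i : ℕ)) ^ 2 * (d ⟨q + (i : ℕ), by omega⟩)⁻¹) := by
      rw [← Matrix.diagonal_one, ← Matrix.diagonal_sub]
    rw [hAeq, hdg, Matrix.mul_sub, Matrix.sub_mul, Matrix.mul_one, hUUT]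
  -- orthogonal invariance of the sum of squares
  have hnorm : ∀ w : Fin m → ℝ, ∑ i, (U *ᵥ w) i ^ 2 = ∑ i, w i ^ 2 := by
    intro w
    have h1 : (U *ᵥ w) ⬝ᵥ (U *ᵥ w) = w ⬝ᵥ w := by
      rw [Matrix.dotProduct_mulVec, ← Matrix.mulVec_transpose,
        Matrix.mulVec_mulVec, hU, Matrix.one_mulVec]
    calc ∑ i, (U *ᵥ w) i ^ 2 = (U *ᵥ w) ⬝ᵥ (U *ᵥ w) := by
          simp [dotProduct, pow_two]
      _ = w ⬝ᵥ w := h1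
      _ = ∑ i, w i ^ 2 := by simp [dotProduct, pow_two]
  rw [h1A, ← Matrix.mulVec_mulVec, ← Matrix.mulVec_mulVec, hnorm]
  apply Finset.sum_congr rfl
  intro i _
  rw [Matrix.mulVec_diagonal]
  simp only [hc]
  set s : ℝ := (Uᵀ *ᵥ rt) i with hs
  have hjn : q + (i : ℕ) < n := by omega
  by_cases hip : q + (i : ℕ) < p
  · rw [if_pos hip]
    set a : ℝ := ν (q + (i : ℕ)) with ha
    set b : ℝ := μ (q + (i : ℕ)) with hb
    have hdj : d ⟨q + (i : ℕ), hjn⟩ = a ^ 2 + (σ ^ 2)⁻¹ * b ^ 2 := by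
      simp only [hd]
      rw [if_pos (by simp), if_pos (by simp [hip])]
    have hapos : 0 < a := hν0 _ (by omega) hip
    have hbpos : 0 < b := hμpos _ (by omega) hip
    have hbne : b ≠ 0 := ne_of_gt hbpos
    have hdne' : a ^ 2 + (σ ^ 2)⁻¹ * b ^ 2 ≠ 0 := by positivity
    have hgne : (a / b) ^ 2 * σ ^ 2 + 1 ≠ 0 := by positivity
    rw [hdj]
    have hσne : σ ≠ 0 := ne_of_gt hσ
    field_simp
    ring
  · rw [if_neg hip]
    have hν1' : ν (q + (i : ℕ)) = 1 := hνtop _ (by omega) hjn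
    have hdj : d ⟨q + (i : ℕ), hjn⟩ = 1 := by
      simp only [hd]
      rw [if_pos (by simp), if_neg (by simp [hip]), hν1']
      simp
    rw [hdj, hν1']
    simp
end
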